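/- For all n ≥ 1, 2^n − C(n, ⌊n/2⌋) = Σ_{k=0}^{n−1} C(k, ⌊k/2⌋)·C(n−k−1, ⌊(n−k−1)/2⌋). -/

import Mathlib

inductive DStep | up | down | right
deriving DecidableEq, Repr

instance : Fintype DStep where
  elems := {DStep.up, DStep.down, DStep.right}
  complete := fun x => by cases x <;> simp

/-- Run a dispersed Dyck path from height `h`; `none` if an illegal step occurs,
otherwise the final height. Down steps require positive height; right steps require height 0. -/
def DStep.run : ℕ → List DStep → Option ℕ
  | h, [] => some h
  | h, .up :: l => DStep.run (h + 1) l
  | h + 1, .down :: l => DStep.run h l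
  | 0, .down :: _ => none
  | 0, .right :: l => DStep.run 0 l
  | _ + 1, .right :: _ => none

/-- A dispersed Dyck path: starts and ends at height 0, all steps legal. -/
def IsDDP (l : List DStep) : Prop := DStep.run 0 l = some 0

instance : DecidablePred IsDDP := fun l => by unfold IsDDP; infer_instance

/-- The finset of all dispersed Dyck paths of length `n`. -/
def DDPs (n : ℕ) : Finset (List.Vector DStep n) :=
  Finset.univ.filter (fun v => IsDDP v.toList)

/-- Number of dispersed Dyck paths of length `n`. -/
def dD (n : ℕ) : ℕ := (DDPs n).card

/-- Total number of up steps over all DDPs of length `n`. -/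
def U (n : ℕ) : ℕ := ∑ v ∈ DDPs n, v.toList.count DStep.up

/-- Total number of down steps over all DDPs of length `n`. -/
def D (n : ℕ) : ℕ := ∑ v ∈ DDPs n, v.toList.count DStep.down

/-- Total number of right steps over all DDPs of length `n`. -/
def R (n : ℕ) : ℕ := ∑ v ∈ DDPs n, v.toList.count DStep.right

/-- `i` is the position of a 1-ascent in `l`: an up step with no adjacent up step. -/
def IsOneAscentAt (l : List DStep) (i : ℕ) : Prop :=
  l[i]? = some .up ∧ l[i + 1]? ≠ some .up ∧ (i = 0 ∨ l[i - 1]? ≠ some .up)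

instance (l : List DStep) : DecidablePred (IsOneAscentAt l) := fun i => by
  unfold IsOneAscentAt; infer_instance

/-- Number of 1-ascents in `l`. -/
def oneAsc (l : List DStep) : ℕ :=
  ((Finset.range l.length).filter (IsOneAscentAt l)).card

/-- Total number of 1-ascents over all DDPs of length `n`. -/
def A (n : ℕ) : ℕ := ∑ v ∈ DDPs n, oneAsc v.toList

/-- Signed final height of a plain path (ignoring any right steps). -/
def psum : List DStep → ℤ
  | [] => 0
  | .up :: l => 1 + psum l
  | .down :: l => -1 + psum l
  | .right :: l => psum l

/-!
Let `F(x) = ∑ C(n, ⌊n/2⌋) xⁿ` and let `C(x)` be the Catalan series. Pascal's rule in the middle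
of the triangle gives `F (1 - 2x) = 1 - x C(x²)`; together with the Catalan equation
`x C(x)² = C(x) - 1` taken at `x²`, it yields `F = C(x²) (1 + x F)` coefficient by coefficient.
Eliminating `C(x²)` gives `x F² + F = 1 / (1 - 2x)`, whose coefficients are the identity.
-/

open Finset

def middleBinom (n : ℕ) : ℕ := n.choose (n / 2)

def evenCatalan (n : ℕ) : ℕ := if Even n then catalan (n / 2) else 0

@[simp]
lemma middleBinom_zero : middleBinom 0 = 1 := rfl

@[simp]
lemma middleBinom_one : middleBinom 1 = 1 := rfl

@[simp]
lemma evenCatalan_zero : evenCatalan 0 = 1 := by simp [evenCatalan]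

lemma evenCatalan_two_mul (m : ℕ) : evenCatalan (2 * m) = catalan m := by
  simp [evenCatalan]

lemma evenCatalan_of_odd {n : ℕ} (hn : Odd n) : evenCatalan n = 0 := by
  simp [evenCatalan, Nat.not_even_iff_odd.mpr hn]

lemma choose_two_mul_add_one_add_catalan (m : ℕ) :
    (2 * m + 1).choose m + catalan m = 2 * (2 * m).choose m := by
  have hpascal := Nat.choose_mul_succ_eq (2 * m) m
  have hcatalan := succ_mul_catalan_eq_centralBinom m
  rw [Nat.centralBinom_eq_two_mul_choose] at hcatalan
  rw [show 2 * m + 1 - m = m + 1 by omega] at hpascal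
  refine Nat.eq_of_mul_eq_mul_left m.succ_pos ?_
  nlinarith

lemma choose_two_mul_add_two (m : ℕ) :
    (2 * m + 2).choose (m + 1) = 2 * (2 * m + 1).choose m := by
  rw [Nat.choose_succ_succ, Nat.choose_symm_half]
  ring

lemma middleBinom_succ_add_evenCatalan (n : ℕ) :
    middleBinom (n + 1) + evenCatalan n = 2 * middleBinom n := by
  obtain ⟨m, rfl | rfl⟩ := Nat.even_or_odd' n
  · rw [middleBinom, middleBinom, evenCatalan_two_mul, show (2 * m + 1) / 2 = m by omega,
      show 2 * m / 2 = m by omega]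
    exact choose_two_mul_add_one_add_catalan m
  · rw [middleBinom, middleBinom, evenCatalan_of_odd (odd_two_mul_add_one m), add_zero,
      show (2 * m + 1 + 1) / 2 = m + 1 by omega, show (2 * m + 1) / 2 = m by omega]
    exact choose_two_mul_add_two m

lemma sum_antidiagonal_evenCatalan_mul_evenCatalan (n : ℕ) :
    ∑ p ∈ antidiagonal n, evenCatalan p.1 * evenCatalan p.2 = evenCatalan (n + 2) := by
  obtain ⟨m, rfl | rfl⟩ := Nat.even_or_odd' n
  · set double : ℕ × ℕ → ℕ × ℕ := fun p => (2 * p.1, 2 * p.2)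
    have hdouble : (antidiagonal m).image double ⊆ antidiagonal (2 * m) := by
      intro p hp
      obtain ⟨q, hq, rfl⟩ := mem_image.mp hp
      rw [HasAntidiagonal.mem_antidiagonal] at hq ⊢
      simp only [double]
      omega
    rw [show 2 * m + 2 = 2 * (m + 1) by ring, evenCatalan_two_mul, catalan_succ',
      ← sum_subset hdouble, sum_image]
    · simp [double, evenCatalan_two_mul]
    · intro p _ q _ h
      simp only [double, Prod.mk.injEq] at h
      ext <;> omega
    · intro p hp hnot
      rw [HasAntidiagonal.mem_antidiagonal] at hp
      obtain ⟨a, ha | ha⟩ := Nat.even_or_odd' p.1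
      · refine absurd (mem_image.mpr ⟨(a, m - a), ?_, ?_⟩) hnot
        · rw [HasAntidiagonal.mem_antidiagonal]
          omega
        · simp only [double, Prod.ext_iff]
          omega
      · rw [evenCatalan_of_odd (ha ▸ odd_two_mul_add_one a), zero_mul]
  · have hodd : Odd (2 * m + 1 + 2) := by simp [parity_simps]
    rw [evenCatalan_of_odd hodd]
    refine sum_eq_zero fun p hp => ?_
    have hsum : Odd (p.1 + p.2) :=
      (HasAntidiagonal.mem_antidiagonal.mp hp) ▸ odd_two_mul_add_one m
    rcases Nat.even_or_odd p.1 with h | h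
    · rw [evenCatalan_of_odd ((Nat.odd_add'.mp hsum).mpr h), mul_zero]
    · rw [evenCatalan_of_odd h, zero_mul]

lemma sum_antidiagonal_mul_middleBinom_succ (g : ℕ → ℕ) (n : ℕ) :
    ∑ p ∈ antidiagonal n, g p.1 * middleBinom (p.2 + 1) +
        ∑ p ∈ antidiagonal n, g p.1 * evenCatalan p.2 =
      2 * ∑ p ∈ antidiagonal n, g p.1 * middleBinom p.2 := by
  rw [← sum_add_distrib, mul_sum]
  refine sum_congr rfl fun p _ => ?_
  rw [← mul_add, middleBinom_succ_add_evenCatalan]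
  ring

lemma middleBinom_succ (n : ℕ) :
    middleBinom (n + 1) =
      evenCatalan (n + 1) + ∑ p ∈ antidiagonal n, evenCatalan p.1 * middleBinom p.2 := by
  induction n with
  | zero => simp [evenCatalan_of_odd odd_one]
  | succ n ih =>
    have hstep := middleBinom_succ_add_evenCatalan (n + 1)
    have hshift := sum_antidiagonal_mul_middleBinom_succ evenCatalan n
    rw [sum_antidiagonal_evenCatalan_mul_evenCatalan] at hshift
    rw [show n + 1 + 1 = n + 2 from rfl] at hstep ⊢
    rw [Nat.sum_antidiagonal_succ', middleBinom_zero, mul_one]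
    dsimp only
    omega

lemma sum_antidiagonal_middleBinom_mul_middleBinom_add (n : ℕ) :
    ∑ p ∈ antidiagonal n, middleBinom p.1 * middleBinom p.2 + middleBinom (n + 1) =
      2 ^ (n + 1) := by
  induction n with
  | zero => simp
  | succ n ih =>
    have hstep := middleBinom_succ_add_evenCatalan (n + 1)
    have hshift := sum_antidiagonal_mul_middleBinom_succ middleBinom n
    have hsplit := middleBinom_succ n
    rw [← Nat.sum_antidiagonal_swap] at hsplit
    simp only [Prod.fst_swap, Prod.snd_swap, mul_comm (evenCatalan _)] at hsplit
    rw [Nat.sum_antidiagonal_succ', pow_succ]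
    dsimp only
    rw [middleBinom_zero, mul_one]
    omega

theorem A045621_identity_general (n : ℕ) :
    2 ^ n - n.choose (n / 2) =
      ∑ k ∈ Finset.range n, k.choose (k / 2) * (n - k - 1).choose ((n - k - 1) / 2) := by
  cases n with
  | zero => rfl
  | succ n =>
    have h := sum_antidiagonal_middleBinom_mul_middleBinom_add n
    rw [Nat.sum_antidiagonal_eq_sum_range_succ (fun i j => middleBinom i * middleBinom j)] at h
    have hindex : ∀ k, n + 1 - k - 1 = n - k := fun k => by omega
    simp only [middleBinom, hindex, Nat.succ_eq_add_one] at h ⊢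
    omega

/-- For `n ≥ 1`, `2^n − C(n,⌊n/2⌋) = Σ_{k=0}^{n−1} C(k,⌊k/2⌋)·C(n−k−1,⌊(n−k−1)/2⌋)`
(OEIS A045621). -/
theorem A045621_identity (n : ℕ) (hn : 1 ≤ n) :
    2 ^ n - n.choose (n / 2) =
      ∑ k ∈ Finset.range n, k.choose (k / 2) * (n - k - 1).choose ((n - k - 1) / 2) :=
  A045621_identity_general n
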